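/- If D is a minimal counterexample, then D has a directed Hamilton cycle C such that each vertex of D monochromatically dominates every vertex of D other than itself and its predecessor on C, and no vertex monochromatically dominates its predecessor on C; moreover, C is the unique Hamilton cycle of D (up to rotation) with this property. -/

import Mathlib

/-- A 3-coloured tournament on vertex type `V`: between any two distinct
vertices there is exactly one directed edge (`beats`), and `colour x y` gives
the colour (one of three: red, blue, green) of the edge from `x` to `y`
(meaningful when `beats x y` holds). -/
structure CTournament (V : Type*) where
  beats : V → V → Prop
  irrefl : ∀ v, ¬ beats v v
  asymm : ∀ v w, beats v w → ¬ beats w v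
  total : ∀ v w, v ≠ w → beats v w ∨ beats w v
  colour : V → V → Fin 3

namespace CTournament

/-- The colour red. -/
def red : Fin 3 := 0
/-- The colour blue. -/
def blue : Fin 3 := 1
/-- The colour green. -/
def green : Fin 3 := 2

variable {V : Type*} (T : CTournament V)

/-- `x` monochromatically dominates `y` in colour `c`: there is a directed
path (with at least one edge) from `x` to `y` all of whose edges have
colour `c`. -/
def Dom (c : Fin 3) (x y : V) : Prop :=
  Relation.TransGen (fun a b => T.beats a b ∧ T.colour a b = c) x y

/-- `x` monochromatically dominates `y` (in some colour). -/
def MDom (x y : V) : Prop := ∃ c, T.Dom c x y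

/-- `x` monochromatically dominates `y` in colour `c` within the
subtournament induced on the vertex set `S`. -/
def DomIn (S : Set V) (c : Fin 3) (x y : V) : Prop :=
  Relation.TransGen (fun a b => a ∈ S ∧ b ∈ S ∧ T.beats a b ∧ T.colour a b = c) x y

/-- `x` monochromatically dominates `y` within the subtournament induced on `S`. -/
def MDomIn (S : Set V) (x y : V) : Prop := ∃ c, T.DomIn S c x y

/-- `T` contains a `T_3`: three vertices spanning a cyclic triangle whose
three edges have three pairwise distinct colours. -/
def HasT3 : Prop :=
  ∃ a b c : V, T.beats a b ∧ T.beats b c ∧ T.beats c a ∧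
    T.colour a b ≠ T.colour b c ∧ T.colour b c ≠ T.colour c a ∧
    T.colour a b ≠ T.colour c a

/-- Vertex `v` is incident with an edge of colour `c`. -/
def IncidentColour (v : V) (c : Fin 3) : Prop :=
  ∃ w, (T.beats v w ∧ T.colour v w = c) ∨ (T.beats w v ∧ T.colour w v = c)

/-- `T` is a minimal counterexample: it contains no `T_3`, no vertex
monochromatically dominates every other vertex, and every proper nonempty
subset of the vertices spans a subtournament containing a vertex that
monochromatically dominates (within that subtournament) every other vertex
of the subset. -/
def MinimalCex : Prop :=
  ¬ T.HasT3 ∧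
  (¬ ∃ x : V, ∀ y, y ≠ x → T.MDom x y) ∧
  ∀ S : Set V, S.Nonempty → S ≠ Set.univ →
    ∃ x ∈ S, ∀ y ∈ S, y ≠ x → T.MDomIn S x y

/-- The permutation `σ` (sending every vertex to its successor) is a directed
Hamilton cycle of `T`: every vertex beats its successor, and all vertices lie
on a single cycle of `σ`. -/
def IsHamCycle (σ : Equiv.Perm V) : Prop :=
  (∀ v, T.beats v (σ v)) ∧ ∀ v w : V, ∃ n : ℕ, (⇑σ)^[n] v = w

/-- The domination property of the Hamilton cycle `σ`: every vertex
monochromatically dominates every vertex other than itself and its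
predecessor on the cycle, and no vertex monochromatically dominates its
predecessor. -/
def HamDomProp (σ : Equiv.Perm V) : Prop :=
  (∀ x y : V, y ≠ x → y ≠ σ.symm x → T.MDom x y) ∧
  ∀ x : V, ¬ T.MDom x (σ.symm x)

/-- The vertex set of the directed subpath `xCy` of the Hamilton cycle whose
successor permutation is `σ`: all vertices reachable from `x` along the cycle
no later than the first visit of `y`. -/
def PathSet (σ : Equiv.Perm V) (x y : V) : Set V :=
  {z | ∃ k : ℕ, (⇑σ)^[k] x = z ∧ ∀ j < k, (⇑σ)^[j] x ≠ y}

/-- `R^+(x)`: the vertices to which `x` sends a red edge. -/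
def Rplus (x : V) : Set V := {v | T.beats x v ∧ T.colour x v = red}
/-- `R^-(x)`: the vertices from which `x` receives a red edge. -/
def Rminus (x : V) : Set V := {v | T.beats v x ∧ T.colour v x = red}
/-- `B^+(x)`: the vertices to which `x` sends a blue edge. -/
def Bplus (x : V) : Set V := {v | T.beats x v ∧ T.colour x v = blue}
/-- `B^-(x)`: the vertices from which `x` receives a blue edge. -/
def Bminus (x : V) : Set V := {v | T.beats v x ∧ T.colour v x = blue}
/-- `R_r^+(x) = {v ∈ R^+(x) : v monochromatically dominates x in red}`. -/
def Rrplus (x : V) : Set V := {v ∈ T.Rplus x | T.Dom red v x}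
/-- `R_r^-(x) = {v ∈ R^-(x) : x monochromatically dominates v in red}`. -/
def Rrminus (x : V) : Set V := {v ∈ T.Rminus x | T.Dom red x v}
/-- `B_b^+(x) = {v ∈ B^+(x) : v monochromatically dominates x in blue}`. -/
def Bbplus (x : V) : Set V := {v ∈ T.Bplus x | T.Dom blue v x}
/-- `B_b^-(x) = {v ∈ B^-(x) : x monochromatically dominates v in blue}`. -/
def Bbminus (x : V) : Set V := {v ∈ T.Bminus x | T.Dom blue x v}

end CTournament

/-!
Deleting a vertex `u` from a minimal counterexample leaves a subtournament with a monochromatic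
king `k`; as `k` is no king of the whole tournament, `k` dominates every vertex except `u`, and
`u` is then the only vertex `k` misses. The map `u ↦ k` is therefore injective, hence a
permutation `σ` of the finite vertex set. A vertex `σ u` does not dominate `u`, so `u` beats
`σ u`. If some `σ`-cycle were not all of `V`, a king of it would have to dominate its own
predecessor, which lies on the same cycle. Any cycle with the domination property has the
predecessor of `x` equal to the unique vertex that `x` misses, whence uniqueness.
-/

namespace CTournament

variable {V : Type*} {T : CTournament V}

def DominatesAllBut (T : CTournament V) (x y : V) : Prop :=
  y ≠ x ∧ ¬ T.MDom x y ∧ ∀ z, z ≠ x → z ≠ y → T.MDom x z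

lemma MDomIn.mdom {S : Set V} {x y : V} (hd : T.MDomIn S x y) : T.MDom x y := by
  obtain ⟨c, hc⟩ := hd
  exact ⟨c, Relation.TransGen.mono (fun _ _ hab => hab.2.2) _ _ hc⟩

lemma mdom_of_beats {x y : V} (hxy : T.beats x y) : T.MDom x y :=
  ⟨T.colour x y, .single ⟨hxy, rfl⟩⟩

lemma DominatesAllBut.unique {x y y' : V} (h : T.DominatesAllBut x y)
    (h' : T.DominatesAllBut x y') : y = y' := by
  by_contra hne
  exact h'.2.1 (h.2.2 y' h'.1 (Ne.symm hne))

lemma DominatesAllBut.beats {x y : V} (h : T.DominatesAllBut x y) : T.beats y x :=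
  (T.total y x h.1).resolve_right fun hxy => h.2.1 (mdom_of_beats hxy)

lemma MinimalCex.exists_dominatesAllBut (h : T.MinimalCex) (u : V) :
    ∃ k, T.DominatesAllBut k u := by
  obtain ⟨y, hyu, -⟩ : ∃ y, y ≠ u ∧ ¬ T.MDom u y := by
    have hnk := h.2.1
    push Not at hnk
    exact hnk u
  obtain ⟨k, hku, hk⟩ :=
    h.2.2 {u}ᶜ ⟨y, hyu⟩ (Set.compl_ne_univ.mpr (Set.singleton_nonempty u))
  have hdom : ∀ z, z ≠ k → z ≠ u → T.MDom k z := fun z hzk hzu => (hk z hzu hzk).mdom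
  refine ⟨k, Ne.symm hku, fun hkd => h.2.1 ⟨k, fun z hzk => ?_⟩, hdom⟩
  by_cases hzu : z = u
  · exact hzu ▸ hkd
  · exact hdom z hzk hzu

lemma MinimalCex.exists_perm_dominatesAllBut [Finite V] (h : T.MinimalCex) :
    ∃ σ : Equiv.Perm V, ∀ x, T.DominatesAllBut x (σ.symm x) := by
  choose k hk using h.exists_dominatesAllBut
  have hinj : Function.Injective k := fun u u' huu' => (hk u).unique (huu' ▸ hk u')
  let σ := Equiv.ofBijective k (Finite.injective_iff_bijective.mp hinj)
  refine ⟨σ, fun x => ?_⟩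
  obtain ⟨u, rfl⟩ := σ.surjective x
  rw [σ.symm_apply_apply]
  exact hk u

lemma MinimalCex.isHamCycle [Finite V] (h : T.MinimalCex) {σ : Equiv.Perm V}
    (hσ : ∀ x, T.DominatesAllBut x (σ.symm x)) : T.IsHamCycle σ := by
  refine ⟨fun v => by simpa using (hσ (σ v)).beats, fun v w => ?_⟩
  by_contra hvw
  have hw : ¬ σ.SameCycle v w := fun hsame => by
    obtain ⟨n, hn⟩ := hsame.exists_nat_pow_eq
    exact hvw ⟨n, hn⟩
  have hcycle : {z | σ.SameCycle v z} ≠ Set.univ := fun hU => hw (hU.symm ▸ Set.mem_univ w :)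
  obtain ⟨k, hk, hkdom⟩ := h.2.2 _ ⟨v, Equiv.Perm.SameCycle.refl σ v⟩ hcycle
  exact (hσ k).2.1 (hkdom _ (Equiv.Perm.SameCycle.symm_apply_right hk) (hσ k).1).mdom

lemma hamDomProp_of_dominatesAllBut {σ : Equiv.Perm V}
    (hσ : ∀ x, T.DominatesAllBut x (σ.symm x)) : T.HamDomProp σ :=
  ⟨fun x y hyx hy => (hσ x).2.2 y hyx hy, fun x => (hσ x).2.1⟩

lemma HamDomProp.dominatesAllBut {σ : Equiv.Perm V} (hb : ∀ v, T.beats v (σ v))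
    (hd : T.HamDomProp σ) (x : V) : T.DominatesAllBut x (σ.symm x) := by
  refine ⟨fun hx => T.irrefl x ?_, hd.2 x, hd.1 x⟩
  have hbx := hb (σ.symm x)
  rwa [Equiv.apply_symm_apply, hx] at hbx

lemma eq_of_dominatesAllBut {σ σ' : Equiv.Perm V} (hσ : ∀ x, T.DominatesAllBut x (σ.symm x))
    (hσ' : ∀ x, T.DominatesAllBut x (σ'.symm x)) : σ = σ' :=
  Equiv.symm_bijective.injective (Equiv.ext fun x => (hσ x).unique (hσ' x))

end CTournament

/-- A minimal counterexample has a directed Hamilton cycle such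
that each vertex monochromatically dominates every vertex other than itself and
its predecessor, no vertex monochromatically dominates its predecessor, and this
Hamilton cycle is unique (up to rotation, which is quotiented out by the
successor-permutation encoding). -/
theorem minimalCex_hamilton_unique {V : Type*} [Fintype V] (T : CTournament V)
    (h : T.MinimalCex) :
    ∃ σ : Equiv.Perm V, T.IsHamCycle σ ∧ T.HamDomProp σ ∧
      ∀ σ' : Equiv.Perm V, T.IsHamCycle σ' → T.HamDomProp σ' → σ' = σ := by
  obtain ⟨σ, hσ⟩ := h.exists_perm_dominatesAllBut
  exact ⟨σ, h.isHamCycle hσ, CTournament.hamDomProp_of_dominatesAllBut hσ,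
    fun σ' hH hD => CTournament.eq_of_dominatesAllBut (hD.dominatesAllBut hH.1) hσ⟩
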